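/- arXiv:2412.03236 — 8 statements merged into one kernel-verified Lean document; each statement's English description precedes it below -/
import Mathlib

section
/- For any quilt f of type (P,Q) with rank P ≥ rank Q, we have f(1̂_P, y) = rank(y) for all y ∈ Q. Symmetrically, if rank P ≤ rank Q, then f(x, 1̂_Q) = rank(x) for all x ∈ P. -/
/-- A quilt of alternating sign matrices of type `(P, Q)`, with respect to given rank
functions `rkP`, `rkQ`: a map `f : P × Q → ℕ` vanishing when either coordinate is the
least element, taking the value `min (rank P) (rank Q)` at `(⊤, ⊤)`, and satisfying
Boolean growth along each cover relation of the product poset `P × Q`. -/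
def IsQuilt {P Q : Type*} [PartialOrder P] [BoundedOrder P] [PartialOrder Q] [BoundedOrder Q]
    (rkP : P → ℕ) (rkQ : Q → ℕ) (f : P → Q → ℕ) : Prop :=
  (∀ y, f ⊥ y = 0) ∧
  (∀ x, f x ⊥ = 0) ∧
  f ⊤ ⊤ = min (rkP ⊤) (rkQ ⊤) ∧
  (∀ a b : P × Q, a ⋖ b → f b.1 b.2 = f a.1 a.2 ∨ f b.1 b.2 = f a.1 a.2 + 1)

/-!
Along the top row `y ↦ f ⊤ y` the quilt grows by 0 or 1 at each cover while the rank grows by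
exactly 1, so the defect `rkQ y - f ⊤ y` is monotone in `y`. It vanishes at `⊥`, and also at `⊤`
because `f ⊤ ⊤ = min (rkP ⊤) (rkQ ⊤) = rkQ ⊤`; hence it vanishes everywhere. The top column is
symmetric.
-/

section CovByStep

variable {α : Type*} [PartialOrder α] [LocallyFiniteOrder α] {rk g : α → ℕ}

theorem monotone_rank_sub_of_covBy_step (hrk : ∀ a b : α, a ⋖ b → rk b = rk a + 1)
    (hg : ∀ a b : α, a ⋖ b → g b = g a ∨ g b = g a + 1) :
    Monotone fun x => (rk x : ℤ) - g x :=
  (monotone_iff_forall_covBy _).2 fun a b hab => by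
    have := hrk a b hab
    rcases hg a b hab with h | h <;> omega

theorem eq_rank_of_covBy_step [BoundedOrder α] (hrk0 : rk ⊥ = 0)
    (hrk : ∀ a b : α, a ⋖ b → rk b = rk a + 1) (hg0 : g ⊥ = 0) (hgtop : g ⊤ = rk ⊤)
    (hg : ∀ a b : α, a ⋖ b → g b = g a ∨ g b = g a + 1) (x : α) : g x = rk x := by
  have hbot := monotone_rank_sub_of_covBy_step hrk hg (bot_le : ⊥ ≤ x)
  have htop := monotone_rank_sub_of_covBy_step hrk hg (le_top : x ≤ ⊤)
  simp only [hrk0, hg0, hgtop] at hbot htop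
  omega

end CovByStep

/-- For any quilt `f` of type `(P, Q)`: if `rank P ≥ rank Q` then `f(⊤_P, y) = rank y`
for all `y ∈ Q`, and if `rank P ≤ rank Q` then `f(x, ⊤_Q) = rank x` for all `x ∈ P`. -/
theorem quilt_top_values
    {P Q : Type*} [Fintype P] [PartialOrder P] [BoundedOrder P]
    [Fintype Q] [PartialOrder Q] [BoundedOrder Q]
    (rkP : P → ℕ) (rkQ : Q → ℕ)
    (hP0 : rkP ⊥ = 0) (hPcov : ∀ x y : P, x ⋖ y → rkP y = rkP x + 1)
    (hQ0 : rkQ ⊥ = 0) (hQcov : ∀ x y : Q, x ⋖ y → rkQ y = rkQ x + 1)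
    (f : P → Q → ℕ) (hf : IsQuilt rkP rkQ f) :
    (rkQ ⊤ ≤ rkP ⊤ → ∀ y : Q, f ⊤ y = rkQ y) ∧
    (rkP ⊤ ≤ rkQ ⊤ → ∀ x : P, f x ⊤ = rkP x) := by
  classical
  let _ := Fintype.toLocallyFiniteOrder (α := P)
  let _ := Fintype.toLocallyFiniteOrder (α := Q)
  obtain ⟨hbotP, hbotQ, htop, hcov⟩ := hf
  constructor
  · intro hle
    exact eq_rank_of_covBy_step hQ0 hQcov (hbotQ ⊤) (htop.trans (min_eq_right hle))
      fun a b hab => hcov (⊤, a) (⊤, b) (Prod.mk_covBy_mk_iff_right.2 hab)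
  · intro hle
    exact eq_rank_of_covBy_step hP0 hPcov (hbotP ⊤) (htop.trans (min_eq_left hle))
      fun a b hab => hcov (a, ⊤) (b, ⊤) (Prod.mk_covBy_mk_iff_left.2 hab)
end

section
/- The set of quilts of type (P,Q), ordered pointwise, is a distributive lattice whose meet and join are the pointwise minimum and maximum. -/
namespace IsQuilt

variable {P Q : Type*} [PartialOrder P] [BoundedOrder P] [PartialOrder Q] [BoundedOrder Q]
  {rkP : P → ℕ} {rkQ : Q → ℕ} {f g : P → Q → ℕ}

theorem map₂ {op : ℕ → ℕ → ℕ} (op_self : ∀ n, op n n = n)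
    (op_step : ∀ a b c d : ℕ, (b = a ∨ b = a + 1) → (d = c ∨ d = c + 1) →
      op b d = op a c ∨ op b d = op a c + 1)
    (hf : IsQuilt rkP rkQ f) (hg : IsQuilt rkP rkQ g) :
    IsQuilt rkP rkQ (fun x y => op (f x y) (g x y)) := by
  obtain ⟨hf_bot_left, hf_bot_right, hf_top, hf_cover⟩ := hf
  obtain ⟨hg_bot_left, hg_bot_right, hg_top, hg_cover⟩ := hg
  refine ⟨fun y => ?_, fun x => ?_, ?_, fun a b hab => ?_⟩ <;> dsimp only
  · rw [hf_bot_left, hg_bot_left, op_self]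
  · rw [hf_bot_right, hg_bot_right, op_self]
  · rw [hf_top, hg_top, op_self]
  · exact op_step _ _ _ _ (hf_cover a b hab) (hg_cover a b hab)

theorem min (hf : IsQuilt rkP rkQ f) (hg : IsQuilt rkP rkQ g) :
    IsQuilt rkP rkQ (fun x y => Min.min (f x y) (g x y)) :=
  hf.map₂ min_self (fun _ _ _ _ _ _ => by omega) hg

theorem max (hf : IsQuilt rkP rkQ f) (hg : IsQuilt rkP rkQ g) :
    IsQuilt rkP rkQ (fun x y => Max.max (f x y) (g x y)) :=
  hf.map₂ max_self (fun _ _ _ _ _ _ => by omega) hg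

end IsQuilt

/-- The set of quilts of type `(P, Q)`, ordered pointwise, is a distributive lattice with
meet and join given by pointwise minimum and maximum: the pointwise min and max of two
quilts are quilts, and the (pointwise) distributive laws hold. -/
theorem quilts_distributive_lattice
    {P Q : Type*} [PartialOrder P] [BoundedOrder P] [PartialOrder Q] [BoundedOrder Q]
    (rkP : P → ℕ) (rkQ : Q → ℕ) :
    (∀ f g : P → Q → ℕ, IsQuilt rkP rkQ f → IsQuilt rkP rkQ g →
      IsQuilt rkP rkQ (fun x y => min (f x y) (g x y)) ∧
      IsQuilt rkP rkQ (fun x y => max (f x y) (g x y))) ∧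
    (∀ f g h : P → Q → ℕ, IsQuilt rkP rkQ f → IsQuilt rkP rkQ g → IsQuilt rkP rkQ h →
      ∀ (x : P) (y : Q),
        max (h x y) (min (f x y) (g x y))
          = min (max (h x y) (f x y)) (max (h x y) (g x y)) ∧
        min (h x y) (max (f x y) (g x y))
          = max (min (h x y) (f x y)) (min (h x y) (g x y))) :=
  ⟨fun _ _ hf hg => ⟨hf.min hg, hf.max hg⟩,
    fun _ _ _ _ _ _ _ _ => ⟨max_min_distrib_left _ _ _, min_max_distrib_left _ _ _⟩⟩
end

section
/- The function f_1(x,y) = min(rank x, rank y) is the greatest element of the lattice of quilts of type (P,Q): it is a quilt, and every quilt f satisfies f(x,y) ≤ min(rank x, rank y) for all x ∈ P, y ∈ Q. -/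
/-! A quilt grows by at most one along each cover of `P × Q` while a rank function grows by
exactly one, so descending from `(x, y)` along covers in the first coordinate alone gives
`f x y ≤ rank x`, and in the second alone `f x y ≤ rank y`. -/

section CovBy

variable {α : Type*} [PartialOrder α] [OrderBot α] [WellFoundedLT α]
  [IsStronglyCoatomic α]

theorem le_of_map_bot_eq_zero_of_covBy {g r : α → ℕ} (hg : g ⊥ = 0)
    (hgcov : ∀ a b, a ⋖ b → g b ≤ g a + 1) (hrcov : ∀ a b, a ⋖ b → r a + 1 ≤ r b)
    (x : α) : g x ≤ r x := by
  induction x using WellFoundedLT.induction with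
  | ind x ih =>
    rcases eq_or_ne x ⊥ with rfl | hx
    · simp [hg]
    · obtain ⟨z, -, hz⟩ := exists_le_covBy_of_lt (bot_lt_iff_ne_bot.2 hx)
      calc g x ≤ g z + 1 := hgcov z x hz
        _ ≤ r z + 1 := Nat.add_le_add_right (ih z hz.lt) 1
        _ ≤ r x := hrcov z x hz

end CovBy

namespace IsQuilt

variable {P Q : Type*} [PartialOrder P] [BoundedOrder P] [PartialOrder Q] [BoundedOrder Q]
  {rkP : P → ℕ} {rkQ : Q → ℕ} {f : P → Q → ℕ}

theorem le_add_one_of_covBy (hf : IsQuilt rkP rkQ f) {a b : P × Q} (h : a ⋖ b) :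
    f b.1 b.2 ≤ f a.1 a.2 + 1 := by
  rcases hf.2.2.2 a b h with h | h <;> omega

theorem le_rank_left [WellFoundedLT P] [IsStronglyCoatomic P] (hf : IsQuilt rkP rkQ f)
    (hPcov : ∀ x y : P, x ⋖ y → rkP y = rkP x + 1) (x : P) (y : Q) : f x y ≤ rkP x :=
  le_of_map_bot_eq_zero_of_covBy (g := (f · y)) (hf.1 y)
    (fun _ _ h => hf.le_add_one_of_covBy (Prod.mk_covBy_mk_iff_left.2 h))
    (fun a b h => (hPcov a b h).ge) x

theorem le_rank_right [WellFoundedLT Q] [IsStronglyCoatomic Q] (hf : IsQuilt rkP rkQ f)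
    (hQcov : ∀ x y : Q, x ⋖ y → rkQ y = rkQ x + 1) (x : P) (y : Q) : f x y ≤ rkQ y :=
  le_of_map_bot_eq_zero_of_covBy (g := (f x ·)) (hf.2.1 x)
    (fun _ _ h => hf.le_add_one_of_covBy (Prod.mk_covBy_mk_iff_right.2 h))
    (fun a b h => (hQcov a b h).ge) y

end IsQuilt

theorem isQuilt_min_rank {P Q : Type*} [PartialOrder P] [BoundedOrder P]
    [PartialOrder Q] [BoundedOrder Q] {rkP : P → ℕ} {rkQ : Q → ℕ}
    (hP0 : rkP ⊥ = 0) (hPcov : ∀ x y : P, x ⋖ y → rkP y = rkP x + 1)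
    (hQ0 : rkQ ⊥ = 0) (hQcov : ∀ x y : Q, x ⋖ y → rkQ y = rkQ x + 1) :
    IsQuilt rkP rkQ (fun x y => min (rkP x) (rkQ y)) := by
  refine ⟨fun y => by simp [hP0], fun x => by simp [hQ0], rfl, ?_⟩
  rintro ⟨a₁, a₂⟩ ⟨b₁, b₂⟩ hab
  dsimp only
  rcases Prod.covBy_iff.1 hab with
    ⟨h₁ : a₁ ⋖ b₁, rfl : a₂ = b₂⟩ | ⟨h₁ : a₂ ⋖ b₂, rfl : a₁ = b₁⟩
  · have := hPcov _ _ h₁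
    omega
  · have := hQcov _ _ h₁
    omega

/-- The function `f₁(x, y) = min (rank x) (rank y)` is the greatest element of the lattice
of quilts of type `(P, Q)`: it is a quilt, and every quilt lies pointwise below it. -/
theorem quilt_top_element
    {P Q : Type*} [Fintype P] [PartialOrder P] [BoundedOrder P]
    [Fintype Q] [PartialOrder Q] [BoundedOrder Q]
    (rkP : P → ℕ) (rkQ : Q → ℕ)
    (hP0 : rkP ⊥ = 0) (hPcov : ∀ x y : P, x ⋖ y → rkP y = rkP x + 1)
    (hQ0 : rkQ ⊥ = 0) (hQcov : ∀ x y : Q, x ⋖ y → rkQ y = rkQ x + 1) :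
    IsQuilt rkP rkQ (fun x y => min (rkP x) (rkQ y)) ∧
    (∀ f : P → Q → ℕ, IsQuilt rkP rkQ f → ∀ (x : P) (y : Q),
      f x y ≤ min (rkP x) (rkQ y)) :=
  ⟨isQuilt_min_rank hP0 hPcov hQ0 hQcov, fun _ hf x y =>
    le_min (hf.le_rank_left hPcov x y) (hf.le_rank_right hQcov x y)⟩
end

section
/- Let P and Q be finite ranked posets with least and greatest elements, with rank P ≤ rank Q, and let g be a Dedekind map of rank l on Q with l ≥ rank P. Then f(x,y) = min(rank x, g(y)) defines a quilt of type (P,Q), and the resulting map from Dedekind maps of rank (rank P) on Q to quilts of type (P,Q) is injective. -/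
/-- A Dedekind map of rank `k` on a poset `Q` with least element. -/
def DedekindMap {Q : Type*} [PartialOrder Q] [OrderBot Q] (k : ℕ) (g : Q → ℕ) : Prop :=
  g ⊥ = 0 ∧
  (∀ x y : Q, x ⋖ y → g y = g x ∨ g y = g x + 1) ∧
  (∀ x, g x ≤ k) ∧
  (∀ i, i ≤ k → ∃ x, g x = i)

theorem min_eq_or_eq_add_one_of_eq_or_eq_add_one {a a' : ℕ} (b : ℕ)
    (h : a' = a ∨ a' = a + 1) : min a' b = min a b ∨ min a' b = min a b + 1 := by
  omega

namespace DedekindMap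

variable {Q : Type*} [PartialOrder Q] {k : ℕ} {g : Q → ℕ}

theorem monotone [OrderBot Q] [Finite Q] (hg : DedekindMap k g) : Monotone g := by
  classical
  have : Fintype Q := Fintype.ofFinite Q
  have : LocallyFiniteOrder Q := Fintype.toLocallyFiniteOrder
  refine (monotone_iff_forall_covBy g).2 fun x y hxy => ?_
  rcases hg.2.1 x y hxy with h | h <;> omega

theorem apply_top [BoundedOrder Q] [Finite Q] (hg : DedekindMap k g) : g ⊤ = k := by
  obtain ⟨x, hx⟩ := hg.2.2.2 k le_rfl
  exact le_antisymm (hg.2.2.1 ⊤) (hx ▸ hg.monotone le_top)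

end DedekindMap

theorem isQuilt_min_rank_dedekindMap {P Q : Type*} [PartialOrder P] [BoundedOrder P]
    [PartialOrder Q] [BoundedOrder Q] [Finite Q] {rkP : P → ℕ} (rkQ : Q → ℕ)
    (hP0 : rkP ⊥ = 0) (hPcov : ∀ x y : P, x ⋖ y → rkP y = rkP x + 1)
    (hPQ : rkP ⊤ ≤ rkQ ⊤) {l : ℕ} {g : Q → ℕ} (hg : DedekindMap l g) (hl : rkP ⊤ ≤ l) :
    IsQuilt rkP rkQ (fun x y => min (rkP x) (g y)) := by
  refine ⟨fun y => by simp [hP0], fun x => by simp [hg.1], ?_, ?_⟩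
  · have := hg.apply_top
    dsimp only
    omega
  · rintro ⟨x, y⟩ ⟨x', y'⟩ hcov
    rcases Prod.mk_covBy_mk_iff.1 hcov with ⟨hx, rfl⟩ | ⟨hy, rfl⟩
    · exact min_eq_or_eq_add_one_of_eq_or_eq_add_one _ (Or.inr (hPcov x x' hx))
    · simpa only [min_comm (rkP x)] using
        min_eq_or_eq_add_one_of_eq_or_eq_add_one (rkP x) (hg.2.1 y y' hy)

theorem dedekind_to_quilt_general
    {P Q : Type*} [PartialOrder P] [BoundedOrder P]
    [Fintype Q] [PartialOrder Q] [BoundedOrder Q]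
    (rkP : P → ℕ) (rkQ : Q → ℕ)
    (hP0 : rkP ⊥ = 0) (hPcov : ∀ x y : P, x ⋖ y → rkP y = rkP x + 1)
    (hPQ : rkP ⊤ ≤ rkQ ⊤) :
    (∀ (l : ℕ) (g : Q → ℕ), DedekindMap l g → rkP ⊤ ≤ l →
      IsQuilt rkP rkQ (fun x y => min (rkP x) (g y))) ∧
    Function.Injective (fun g : {g : Q → ℕ // DedekindMap (rkP ⊤) g} =>
      fun (x : P) (y : Q) => min (rkP x) (g.1 y)) := by
  refine ⟨fun l g hg hl => isQuilt_min_rank_dedekindMap rkQ hP0 hPcov hPQ hg hl, ?_⟩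
  rintro ⟨g₁, hg₁⟩ ⟨g₂, hg₂⟩ hf
  ext y
  have hrow := congrFun (congrFun hf ⊤) y
  simpa only [min_eq_right (hg₁.2.2.1 y), min_eq_right (hg₂.2.2.1 y)] using hrow

/-- If `rank P ≤ rank Q` and `g` is a Dedekind map of rank `l ≥ rank P` on `Q`, then
`f(x, y) = min (rank x) (g y)` is a quilt of type `(P, Q)`; moreover the resulting map
from Dedekind maps of rank `rank P` on `Q` to quilts of type `(P, Q)` is injective. -/
theorem dedekind_to_quilt
    {P Q : Type*} [Fintype P] [PartialOrder P] [BoundedOrder P]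
    [Fintype Q] [PartialOrder Q] [BoundedOrder Q]
    (rkP : P → ℕ) (rkQ : Q → ℕ)
    (hP0 : rkP ⊥ = 0) (hPcov : ∀ x y : P, x ⋖ y → rkP y = rkP x + 1)
    (hQ0 : rkQ ⊥ = 0) (hQcov : ∀ x y : Q, x ⋖ y → rkQ y = rkQ x + 1)
    (hPQ : rkP ⊤ ≤ rkQ ⊤) :
    (∀ (l : ℕ) (g : Q → ℕ), DedekindMap l g → rkP ⊤ ≤ l →
      IsQuilt rkP rkQ (fun x y => min (rkP x) (g y))) ∧
    Function.Injective (fun g : {g : Q → ℕ // DedekindMap (rkP ⊤) g} =>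
      fun (x : P) (y : Q) => min (rkP x) (g.1 y)) :=
  dedekind_to_quilt_general rkP rkQ hP0 hPcov hPQ
end

section
/- Let φ be an antiautomorphism of P (an order-reversing bijection P → P whose inverse is also order-reversing) and suppose rank P ≥ rank Q. Then the map Φ defined by Φ(f)(x,y) = rank(y) − f(φ(x), y) sends quilts of type (P,Q) to quilts of type (P,Q) and is an antiautomorphism of the lattice Quilts(P,Q); moreover if φ is an involution then so is Φ. -/
/-!
An antiautomorphism `φ` reverses covers and swaps `⊥` and `⊤`. Hence the 0/1 growth of `f` along
covers of `P × Q` becomes 0/1 growth of `rk y - f (φ x) y`: along `P` because `φ` reverses the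
cover, along `Q` because `rk` itself grows by exactly one. The boundary values come from
`f x y ≤ rk y` and from `f ⊤ y = rk y`, which `rank Q ≤ rank P` forces by descending induction
from `f ⊤ ⊤ = rk ⊤`. The same bound makes the map invertible (its inverse is built from `φ⁻¹`)
and order-reversing.
-/

open Function OrderDual

section Antiautomorphism

variable {P : Type*} [PartialOrder P] {φ : P → P}

noncomputable def antiOrderIso (hsurj : Surjective φ) (hφ : ∀ x y, x ≤ y ↔ φ y ≤ φ x) : P ≃o Pᵒᵈ :=
  RelIso.ofSurjective (OrderEmbedding.ofMapLEIff (toDual ∘ φ) fun a b => (hφ a b).symm) hsurj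

variable (hsurj : Surjective φ) (hφ : ∀ x y, x ≤ y ↔ φ y ≤ φ x)
include hsurj hφ

lemma map_top_of_le_iff_swap [BoundedOrder P] : φ ⊤ = ⊥ :=
  congrArg ofDual (antiOrderIso hsurj hφ).map_top

lemma map_bot_of_le_iff_swap [BoundedOrder P] : φ ⊥ = ⊤ :=
  congrArg ofDual (antiOrderIso hsurj hφ).map_bot

lemma covBy_of_le_iff_swap {a b : P} (h : a ⋖ b) : φ b ⋖ φ a :=
  toDual_covBy_toDual_iff.1 ((apply_covBy_apply_iff (antiOrderIso hsurj hφ)).2 h)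

lemma exists_inverse_of_le_iff_swap :
    ∃ ψ : P → P, Surjective ψ ∧ (∀ x y, x ≤ y ↔ ψ y ≤ ψ x) ∧
      LeftInverse ψ φ ∧ RightInverse ψ φ :=
  let e := antiOrderIso hsurj hφ
  ⟨fun x => e.symm (toDual x), e.symm.surjective.comp toDual.surjective,
    fun _ _ => (e.symm.le_iff_le.trans toDual_le_toDual).symm,
    e.symm_apply_apply, e.apply_symm_apply⟩

end Antiautomorphism

def quiltDual {P Q : Type*} (rkQ : Q → ℕ) (φ : P → P) (f : P → Q → ℕ) : P → Q → ℕ :=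
  fun x y => rkQ y - f (φ x) y

section QuiltDual

variable {P Q : Type*} {rkQ : Q → ℕ} {φ : P → P} {f g : P → Q → ℕ}

@[simp]
lemma quiltDual_apply (x : P) (y : Q) : quiltDual rkQ φ f x y = rkQ y - f (φ x) y := rfl

lemma quiltDual_quiltDual {ψ : P → P} (hψ : RightInverse ψ φ) (hf : ∀ x y, f x y ≤ rkQ y) :
    quiltDual rkQ ψ (quiltDual rkQ φ f) = f := by
  funext x y
  rw [quiltDual_apply, quiltDual_apply, hψ x]
  exact Nat.sub_sub_self (hf x y)

lemma quiltDual_le_quiltDual_iff (hsurj : Surjective φ) (hf : ∀ x y, f x y ≤ rkQ y) :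
    quiltDual rkQ φ g ≤ quiltDual rkQ φ f ↔ f ≤ g := by
  refine ⟨fun h x y => ?_, fun h x y => Nat.sub_le_sub_left (h _ _) _⟩
  obtain ⟨x, rfl⟩ := hsurj x
  exact (Nat.sub_le_sub_iff_left (hf _ y)).1 (h x y)

end QuiltDual

section Quilt

variable {P Q : Type*} [PartialOrder P] [BoundedOrder P] [PartialOrder Q] [BoundedOrder Q]
  {rkP : P → ℕ} {rkQ : Q → ℕ} {f : P → Q → ℕ}

lemma IsQuilt.apply_covBy_left (hf : IsQuilt rkP rkQ f) {x x' : P} (h : x ⋖ x') (y : Q) :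
    f x' y = f x y ∨ f x' y = f x y + 1 :=
  hf.2.2.2 (x, y) (x', y) (Prod.mk_covBy_mk_iff_left.2 h)

lemma IsQuilt.apply_covBy_right (hf : IsQuilt rkP rkQ f) (x : P) {y y' : Q} (h : y ⋖ y') :
    f x y' = f x y ∨ f x y' = f x y + 1 :=
  hf.2.2.2 (x, y) (x, y') (Prod.mk_covBy_mk_iff_right.2 h)

variable [WellFoundedLT Q] [WellFoundedGT Q]
  (hQ0 : rkQ ⊥ = 0) (hQcov : ∀ x y : Q, x ⋖ y → rkQ y = rkQ x + 1)
include hQ0 hQcov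

lemma IsQuilt.le_rank (hf : IsQuilt rkP rkQ f) (x : P) (y : Q) : f x y ≤ rkQ y := by
  induction y using WellFoundedLT.induction with
  | _ y ih =>
    rcases eq_or_ne y ⊥ with rfl | hy
    · simp [hf.2.1, hQ0]
    obtain ⟨z, hz⟩ := exists_covBy_of_wellFoundedGT (not_isMin_iff_ne_bot.2 hy)
    have := hf.apply_covBy_right x hz
    have := ih z hz.lt
    have := hQcov z y hz
    omega

lemma IsQuilt.top_apply (hrk : rkQ ⊤ ≤ rkP ⊤) (hf : IsQuilt rkP rkQ f) (y : Q) :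
    f ⊤ y = rkQ y := by
  induction y using WellFoundedGT.induction with
  | _ y ih =>
    rcases eq_or_ne y ⊤ with rfl | hy
    · rw [hf.2.2.1]; omega
    obtain ⟨z, hz⟩ := exists_covBy_of_wellFoundedLT (not_isMax_iff_ne_top.2 hy)
    have := hf.apply_covBy_right ⊤ hz
    have := ih z hz.lt
    have := hf.le_rank hQ0 hQcov ⊤ y
    have := hQcov y z hz
    omega

lemma IsQuilt.quiltDual (hrk : rkQ ⊤ ≤ rkP ⊤) {φ : P → P} (hsurj : Surjective φ)
    (hφ : ∀ x y, x ≤ y ↔ φ y ≤ φ x) (hf : IsQuilt rkP rkQ f) :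
    IsQuilt rkP rkQ (quiltDual rkQ φ f) := by
  refine ⟨fun y => ?_, fun x => by simp [hQ0], ?_, ?_⟩
  · simp [map_bot_of_le_iff_swap hsurj hφ, hf.top_apply hQ0 hQcov hrk]
  · simp [map_top_of_le_iff_swap hsurj hφ, hf.1, min_eq_right hrk]
  rintro ⟨a, c⟩ ⟨b, d⟩ hcov
  have := hf.le_rank hQ0 hQcov (φ a) c
  simp only [quiltDual_apply]
  rcases Prod.mk_covBy_mk_iff.1 hcov with ⟨hab, rfl⟩ | ⟨hcd, rfl⟩
  · have := hf.apply_covBy_left (covBy_of_le_iff_swap hsurj hφ hab) c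
    have := hf.le_rank hQ0 hQcov (φ b) c
    omega
  · have := hf.apply_covBy_right (φ a) hcd
    have := hQcov c d hcd
    omega

end Quilt

theorem quilt_antiautomorphism_general
    {P Q : Type*} [PartialOrder P] [BoundedOrder P]
    [Fintype Q] [PartialOrder Q] [BoundedOrder Q]
    (rkP : P → ℕ) (rkQ : Q → ℕ)
    (hQ0 : rkQ ⊥ = 0) (hQcov : ∀ x y : Q, x ⋖ y → rkQ y = rkQ x + 1)
    (hrk : rkQ ⊤ ≤ rkP ⊤)
    (φ : P → P) (hbij : Function.Bijective φ)
    (hanti : ∀ x y : P, x ≤ y ↔ φ y ≤ φ x) :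
    (∀ f : P → Q → ℕ, IsQuilt rkP rkQ f →
      IsQuilt rkP rkQ (fun x y => rkQ y - f (φ x) y)) ∧
    Set.BijOn (fun (f : P → Q → ℕ) => fun x y => rkQ y - f (φ x) y)
      {f | IsQuilt rkP rkQ f} {f | IsQuilt rkP rkQ f} ∧
    (∀ f g : P → Q → ℕ, IsQuilt rkP rkQ f → IsQuilt rkP rkQ g →
      ((∀ (x : P) (y : Q), f x y ≤ g x y) ↔
        (∀ (x : P) (y : Q), rkQ y - g (φ x) y ≤ rkQ y - f (φ x) y))) ∧
    ((∀ x, φ (φ x) = x) → ∀ f : P → Q → ℕ, IsQuilt rkP rkQ f →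
      (fun x y => rkQ y - (fun x y => rkQ y - f (φ x) y) (φ x) y) = f) := by
  obtain ⟨ψ, hψsurj, hψ, hψφ, hφψ⟩ := exists_inverse_of_le_iff_swap hbij.2 hanti
  have hle {f} (hf : IsQuilt rkP rkQ f) := hf.le_rank hQ0 hQcov
  have hmaps : Set.MapsTo (quiltDual rkQ φ) {f | IsQuilt rkP rkQ f} {f | IsQuilt rkP rkQ f} :=
    fun f hf => hf.quiltDual hQ0 hQcov hrk hbij.2 hanti
  refine ⟨hmaps, ?_, fun f g hf _ => (quiltDual_le_quiltDual_iff hbij.2 (hle hf)).symm,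
    fun hinv f hf => quiltDual_quiltDual hinv (hle hf)⟩
  exact Set.InvOn.bijOn (f' := quiltDual rkQ ψ) ⟨fun f hf => quiltDual_quiltDual hφψ (hle hf),
    fun g hg => quiltDual_quiltDual hψφ (hle hg)⟩ hmaps
    fun g hg => hg.quiltDual hQ0 hQcov hrk hψsurj hψ

/-- Let `φ` be an antiautomorphism of `P` (an order-reversing bijection) and suppose
`rank P ≥ rank Q`. Then `Φ(f)(x, y) = rank y - f(φ x, y)` maps quilts of type `(P, Q)`
to quilts of type `(P, Q)`, is an antiautomorphism of the quilt lattice (an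
order-reversing bijection of the set of quilts onto itself), and is an involution on
quilts whenever `φ` is an involution. -/
theorem quilt_antiautomorphism
    {P Q : Type*} [Fintype P] [PartialOrder P] [BoundedOrder P]
    [Fintype Q] [PartialOrder Q] [BoundedOrder Q]
    (rkP : P → ℕ) (rkQ : Q → ℕ)
    (hP0 : rkP ⊥ = 0) (hPcov : ∀ x y : P, x ⋖ y → rkP y = rkP x + 1)
    (hQ0 : rkQ ⊥ = 0) (hQcov : ∀ x y : Q, x ⋖ y → rkQ y = rkQ x + 1)
    (hrk : rkQ ⊤ ≤ rkP ⊤)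
    (φ : P → P) (hbij : Function.Bijective φ)
    (hanti : ∀ x y : P, x ≤ y ↔ φ y ≤ φ x) :
    (∀ f : P → Q → ℕ, IsQuilt rkP rkQ f →
      IsQuilt rkP rkQ (fun x y => rkQ y - f (φ x) y)) ∧
    Set.BijOn (fun (f : P → Q → ℕ) => fun x y => rkQ y - f (φ x) y)
      {f | IsQuilt rkP rkQ f} {f | IsQuilt rkP rkQ f} ∧
    (∀ f g : P → Q → ℕ, IsQuilt rkP rkQ f → IsQuilt rkP rkQ g →
      ((∀ (x : P) (y : Q), f x y ≤ g x y) ↔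
        (∀ (x : P) (y : Q), rkQ y - g (φ x) y ≤ rkQ y - f (φ x) y))) ∧
    ((∀ x, φ (φ x) = x) → ∀ f : P → Q → ℕ, IsQuilt rkP rkQ f →
      (fun x y => rkQ y - (fun x y => rkQ y - f (φ x) y) (φ x) y) = f) :=
  quilt_antiautomorphism_general rkP rkQ hQ0 hQcov hrk φ hbij hanti
end

section
/- Suppose ψ : Q' → Q is surjective and satisfies: whenever x ⋖ y in Q', either ψ(x) = ψ(y) or ψ(x) ⋖ ψ(y). If rank P ≤ rank Q, then the map Ψ defined by Ψ(f)(x,y') = f(x, ψ(y')) is an injective lattice homomorphism from Quilts(P,Q) to Quilts(P,Q'). -/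
section CoverPreserving

variable {α β : Type*} [PartialOrder α] [LocallyFiniteOrder α] [PartialOrder β] {ψ : α → β}

lemma monotone_of_forall_covBy_eq_or_covBy (hcov : ∀ x y, x ⋖ y → ψ x = ψ y ∨ ψ x ⋖ ψ y) :
    Monotone ψ :=
  (monotone_iff_forall_covBy ψ).mpr fun x y hxy => (hcov x y hxy).elim (·.le) (·.le)

lemma rank_map_le_of_forall_covBy_eq_or_covBy [OrderBot α] [OrderBot β]
    {rkα : α → ℕ} {rkβ : β → ℕ} (hβ0 : rkβ ⊥ = 0) (hβcov : ∀ x y, x ⋖ y → rkβ y = rkβ x + 1)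
    (hαcov : ∀ x y, x ⋖ y → rkα y = rkα x + 1) (hbot : ψ ⊥ = ⊥)
    (hcov : ∀ x y, x ⋖ y → ψ x = ψ y ∨ ψ x ⋖ ψ y) (y : α) : rkβ (ψ y) ≤ rkα y := by
  have hdefect : Monotone fun y => (rkα y : ℤ) - rkβ (ψ y) := by
    refine (monotone_iff_forall_covBy _).mpr fun x y hxy => ?_
    rcases hcov x y hxy with h | h
    · simp only [hαcov x y hxy, h]; omega
    · simp only [hαcov x y hxy, hβcov _ _ h]; omega
  have := hdefect (bot_le : ⊥ ≤ y)
  simp only [hbot, hβ0] at this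
  omega

end CoverPreserving

lemma Monotone.map_bot_of_surjective {α β : Type*} [Preorder α] [OrderBot α] [PartialOrder β]
    [OrderBot β] {ψ : α → β} (hmono : Monotone ψ) (hsurj : Function.Surjective ψ) : ψ ⊥ = ⊥ := by
  obtain ⟨x, hx⟩ := hsurj ⊥
  exact le_bot_iff.mp (hx ▸ hmono bot_le)

lemma Monotone.map_top_of_surjective {α β : Type*} [Preorder α] [OrderTop α] [PartialOrder β]
    [OrderTop β] {ψ : α → β} (hmono : Monotone ψ) (hsurj : Function.Surjective ψ) : ψ ⊤ = ⊤ :=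
  hmono.dual.map_bot_of_surjective hsurj

lemma IsQuilt.comp_right {P Q Q' : Type*} [PartialOrder P] [BoundedOrder P]
    [PartialOrder Q] [BoundedOrder Q] [PartialOrder Q'] [BoundedOrder Q']
    {rkP : P → ℕ} {rkQ : Q → ℕ} {rkQ' : Q' → ℕ} {f : P → Q → ℕ} (hf : IsQuilt rkP rkQ f)
    (hPQ : rkP ⊤ ≤ rkQ ⊤) (hQQ' : rkQ ⊤ ≤ rkQ' ⊤) {ψ : Q' → Q} (hbot : ψ ⊥ = ⊥)
    (htop : ψ ⊤ = ⊤) (hcov : ∀ x y : Q', x ⋖ y → ψ x = ψ y ∨ ψ x ⋖ ψ y) :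
    IsQuilt rkP rkQ' (fun x y' => f x (ψ y')) := by
  obtain ⟨hf_bot_left, hf_bot_right, hf_top, hf_growth⟩ := hf
  refine ⟨fun y' => hf_bot_left (ψ y'), fun x => (congrArg (f x) hbot).trans (hf_bot_right x), ?_, ?_⟩
  · simp only [htop, hf_top, min_eq_left hPQ, min_eq_left (hPQ.trans hQQ')]
  · rintro ⟨x, y'⟩ ⟨u, v'⟩ hcover
    rcases Prod.mk_covBy_mk_iff.mp hcover with ⟨hxu, rfl⟩ | ⟨hyv, rfl⟩
    · exact hf_growth (x, ψ y') (u, ψ y') (Prod.mk_covBy_mk_iff_left.mpr hxu)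
    · rcases hcov y' v' hyv with h | h
      · simp only [h, true_or]
      · exact hf_growth (x, ψ y') (x, ψ v') (Prod.mk_covBy_mk_iff_right.mpr h)

theorem quilt_pullback_general
    {P Q Q' : Type*} [PartialOrder P] [BoundedOrder P]
    [PartialOrder Q] [BoundedOrder Q]
    [Fintype Q'] [PartialOrder Q'] [BoundedOrder Q']
    (rkP : P → ℕ) (rkQ : Q → ℕ) (rkQ' : Q' → ℕ)
    (hQ0 : rkQ ⊥ = 0) (hQcov : ∀ x y : Q, x ⋖ y → rkQ y = rkQ x + 1)
    (hQ'cov : ∀ x y : Q', x ⋖ y → rkQ' y = rkQ' x + 1)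
    (hPQ : rkP ⊤ ≤ rkQ ⊤)
    (ψ : Q' → Q) (hsurj : Function.Surjective ψ)
    (hcov : ∀ x y : Q', x ⋖ y → ψ x = ψ y ∨ ψ x ⋖ ψ y) :
    (∀ f : P → Q → ℕ, IsQuilt rkP rkQ f →
      IsQuilt rkP rkQ' (fun x y' => f x (ψ y'))) ∧
    Set.InjOn (fun (f : P → Q → ℕ) => fun (x : P) (y' : Q') => f x (ψ y'))
      {f | IsQuilt rkP rkQ f} ∧
    (∀ f g : P → Q → ℕ, IsQuilt rkP rkQ f → IsQuilt rkP rkQ g →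
      ((∀ (x : P) (y : Q), f x y ≤ g x y) ↔
        (∀ (x : P) (y' : Q'), f x (ψ y') ≤ g x (ψ y')))) := by
  classical
  let := Fintype.toLocallyFiniteOrder (α := Q')
  have hmono := monotone_of_forall_covBy_eq_or_covBy hcov
  have hbot := hmono.map_bot_of_surjective hsurj
  have htop := hmono.map_top_of_surjective hsurj
  have hQQ' : rkQ ⊤ ≤ rkQ' ⊤ :=
    htop ▸ rank_map_le_of_forall_covBy_eq_or_covBy hQ0 hQcov hQ'cov hbot hcov ⊤
  exact ⟨fun f hf => hf.comp_right hPQ hQQ' hbot htop hcov,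
    fun f _ g _ hfg => funext fun x => hsurj.injective_comp_right (congrFun hfg x),
    fun f g _ _ => forall_congr' fun x => hsurj.forall⟩

/-- Suppose `ψ : Q' → Q` is surjective and sends each cover relation of `Q'` either to an
equality or to a cover relation of `Q`.  If `rank P ≤ rank Q`, then
`Ψ(f)(x, y') = f(x, ψ y')` maps quilts of type `(P, Q)` to quilts of type `(P, Q')`, and
`Ψ` is an injective lattice homomorphism: injective on quilts, preserving and reflecting
the pointwise order (and hence the pointwise meets and joins). -/
theorem quilt_pullback
    {P Q Q' : Type*} [Fintype P] [PartialOrder P] [BoundedOrder P]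
    [Fintype Q] [PartialOrder Q] [BoundedOrder Q]
    [Fintype Q'] [PartialOrder Q'] [BoundedOrder Q']
    (rkP : P → ℕ) (rkQ : Q → ℕ) (rkQ' : Q' → ℕ)
    (hP0 : rkP ⊥ = 0) (hPcov : ∀ x y : P, x ⋖ y → rkP y = rkP x + 1)
    (hQ0 : rkQ ⊥ = 0) (hQcov : ∀ x y : Q, x ⋖ y → rkQ y = rkQ x + 1)
    (hQ'0 : rkQ' ⊥ = 0) (hQ'cov : ∀ x y : Q', x ⋖ y → rkQ' y = rkQ' x + 1)
    (hPQ : rkP ⊤ ≤ rkQ ⊤)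
    (ψ : Q' → Q) (hsurj : Function.Surjective ψ)
    (hcov : ∀ x y : Q', x ⋖ y → ψ x = ψ y ∨ ψ x ⋖ ψ y) :
    (∀ f : P → Q → ℕ, IsQuilt rkP rkQ f →
      IsQuilt rkP rkQ' (fun x y' => f x (ψ y'))) ∧
    Set.InjOn (fun (f : P → Q → ℕ) => fun (x : P) (y' : Q') => f x (ψ y'))
      {f | IsQuilt rkP rkQ f} ∧
    (∀ f g : P → Q → ℕ, IsQuilt rkP rkQ f → IsQuilt rkP rkQ g →
      ((∀ (x : P) (y : Q), f x y ≤ g x y) ↔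
        (∀ (x : P) (y' : Q'), f x (ψ y') ≤ g x (ψ y')))) :=
  quilt_pullback_general rkP rkQ rkQ' hQ0 hQcov hQ'cov hPQ ψ hsurj hcov
end

section
/- Let f be a quilt of type (P, C_n). For x ∈ P let J_f(x) = { i ∈ {1,...,n} : f(x,i) = f(x,i−1) + 1 } be the set of jumps. If x ⋖ y in P, then writing J_f(x) = {s_1 < ... < s_p} and J_f(y) = {t_1 < ... < t_q}, either q = p and t_1 ≤ s_1 ≤ t_2 ≤ s_2 ≤ ... ≤ t_q ≤ s_q, or q = p + 1 and t_1 ≤ s_1 ≤ t_2 ≤ ... ≤ s_p ≤ t_q (the sets interlace). -/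
/-- A quilt of type `(P, C_n)` where `C_n = {0, 1, …, n}` is the chain of rank `n`,
written out with the chain coordinate as a natural number: `f(x, i)` is constrained for
`0 ≤ i ≤ n`. -/
def IsChainQuilt {P : Type*} [PartialOrder P] [BoundedOrder P] (rkP : P → ℕ) (n : ℕ)
    (f : P → ℕ → ℕ) : Prop :=
  (∀ i, f ⊥ i = 0) ∧
  (∀ x, f x 0 = 0) ∧
  f ⊤ n = min (rkP ⊤) n ∧
  (∀ (x : P) (i : ℕ), i < n → f x (i + 1) = f x i ∨ f x (i + 1) = f x i + 1) ∧
  (∀ (x y : P) (i : ℕ), i ≤ n → x ⋖ y → f y i = f x i ∨ f y i = f x i + 1)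

/-- The set of jumps `J_f(x) = { i ∈ {1,…,n} : f(x, i) = f(x, i-1) + 1 }`. -/
def jumpSet {P : Type*} (n : ℕ) (f : P → ℕ → ℕ) (x : P) : Finset ℕ :=
  (Finset.Icc 1 n).filter fun i => f x i = f x (i - 1) + 1

/-!
For `m ≤ n`, `f (x, m)` counts the jumps of `x` up to `m`, so the `i`-th jump of `x` is at most
`m` exactly when `i < f (x, m)`. Since `f (y, m) - f (x, m) ∈ {0, 1}`, comparing these counts at
a jump `m = s_i` of `x` gives `t_i ≤ s_i`, and at a jump `m = t_{i+1}` of `y` gives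
`s_i ≤ t_{i+1}`.
-/

open Finset

theorem Finset.sort_getElem_le_iff {α : Type*} [LinearOrder α] (s : Finset α) {i : ℕ}
    (hi : i < s.sort.length) (m : α) : s.sort[i] ≤ m ↔ i < #{a ∈ s | a ≤ m} := by
  set e := s.orderEmbOfFin rfl
  have hcard : #{a ∈ s | a ≤ m} = #{j | e j ≤ m} := by
    conv_lhs => rw [← map_orderEmbOfFin_univ s rfl, filter_map, card_map]
    rfl
  let j : Fin #s := ⟨i, by simpa using hi⟩
  change e j ≤ m ↔ _
  rw [hcard]
  constructor
  · intro hj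
    calc i < #(Iic j) := by simp [j]
      _ ≤ _ := card_le_card fun k hk => by
        simpa using (e.monotone (mem_Iic.mp hk)).trans hj
  · intro hlt
    by_contra! hj
    have : #{k | e k ≤ m} ≤ #(Iio j) := card_le_card fun k hk => by
      simp only [mem_filter, mem_univ, true_and] at hk
      exact mem_Iio.mpr (e.lt_iff_lt.mp (hk.trans_lt hj))
    simp only [Fin.card_Iio, j] at this
    omega

theorem Finset.sort_getD_le_sort_getD_add {α : Type*} [LinearOrder α] (S T : Finset α) (k : ℕ)
    (d : α) (h : ∀ m ∈ T, #{a ∈ T | a ≤ m} ≤ #{a ∈ S | a ≤ m} + k) {i : ℕ}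
    (hi : i + k < T.sort.length) : S.sort.getD i d ≤ T.sort.getD (i + k) d := by
  set m := T.sort[i + k]
  have hm : m ∈ T := (mem_sort _).mp (List.getElem_mem hi)
  have hT : i + k < #{a ∈ T | a ≤ m} := (T.sort_getElem_le_iff hi m).mp le_rfl
  have hS : i < #{a ∈ S | a ≤ m} := by have := h m hm; omega
  have hiS : i < S.sort.length := by
    rw [length_sort]
    exact hS.trans_le (card_filter_le _ _)
  rw [List.getD_eq_getElem _ _ hiS, List.getD_eq_getElem _ _ hi]
  exact (S.sort_getElem_le_iff hiS m).mpr hS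

theorem eq_add_card_filter_jumps (g : ℕ → ℕ) (i : ℕ)
    (hg : ∀ j < i, g (j + 1) = g j ∨ g (j + 1) = g j + 1) :
    g i = g 0 + #{j ∈ Icc 1 i | g j = g (j - 1) + 1} := by
  induction i with
  | zero => simp
  | succ i ih =>
    rw [card_filter, sum_Icc_succ_top (by omega), ← card_filter, ← add_assoc,
      ← ih fun j hj => hg j (by omega)]
    rcases hg i (by omega) with h | h <;> simp [h]

theorem card_filter_le_jumpSet_eq {P : Type*} {n : ℕ} {f : P → ℕ → ℕ} {x : P} (h0 : f x 0 = 0)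
    (hstep : ∀ i < n, f x (i + 1) = f x i ∨ f x (i + 1) = f x i + 1) {m : ℕ} (hm : m ≤ n) :
    #{j ∈ jumpSet n f x | j ≤ m} = f x m := by
  rw [eq_add_card_filter_jumps (f x) m fun j hj => hstep j (by omega), h0, zero_add]
  congr 1
  ext j
  simp only [jumpSet, mem_filter, mem_Icc]
  omega

theorem le_of_mem_jumpSet {P : Type*} {n : ℕ} {f : P → ℕ → ℕ} {x : P} {j : ℕ}
    (hj : j ∈ jumpSet n f x) : j ≤ n :=
  (mem_Icc.mp (mem_filter.mp hj).1).2

theorem card_jumpSet {P : Type*} {n : ℕ} {f : P → ℕ → ℕ} {x : P} (h0 : f x 0 = 0)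
    (hstep : ∀ i < n, f x (i + 1) = f x i ∨ f x (i + 1) = f x i + 1) :
    #(jumpSet n f x) = f x n := by
  rw [← card_filter_le_jumpSet_eq h0 hstep le_rfl, filter_true_of_mem fun j => le_of_mem_jumpSet]

/-- Interlacing of jump sets: if `f` is a quilt of type `(P, C_n)` and `x ⋖ y` in `P`,
then, writing `s₁ < … < s_p` and `t₁ < … < t_q` for the elements of `J_f(x)` and
`J_f(y)`, either `q = p` or `q = p + 1`, and the interlacing inequalities
`t₁ ≤ s₁ ≤ t₂ ≤ s₂ ≤ …` hold, i.e. `tᵢ ≤ sᵢ` for all valid `i` and `sᵢ ≤ tᵢ₊₁` for all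
valid `i` (indices as positions in the increasingly sorted lists). -/
theorem chainQuilt_jumps_interlace
    {P : Type*} [PartialOrder P] [BoundedOrder P] (rkP : P → ℕ) (n : ℕ)
    (f : P → ℕ → ℕ) (hf : IsChainQuilt rkP n f) {x y : P} (hxy : x ⋖ y) :
    ((jumpSet n f y).card = (jumpSet n f x).card ∨
      (jumpSet n f y).card = (jumpSet n f x).card + 1) ∧
    (∀ i : ℕ, i < ((jumpSet n f x).sort (· ≤ ·)).length →
      ((jumpSet n f y).sort (· ≤ ·)).getD i 0 ≤ ((jumpSet n f x).sort (· ≤ ·)).getD i 0) ∧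
    (∀ i : ℕ, i + 1 < ((jumpSet n f y).sort (· ≤ ·)).length →
      ((jumpSet n f x).sort (· ≤ ·)).getD i 0 ≤
        ((jumpSet n f y).sort (· ≤ ·)).getD (i + 1) 0) := by
  obtain ⟨-, h0, -, hstep, hcover⟩ := hf
  have hcount (z : P) {m : ℕ} (hm : m ≤ n) : #{j ∈ jumpSet n f z | j ≤ m} = f z m :=
    card_filter_le_jumpSet_eq (h0 z) (hstep z) hm
  have hcard (z : P) : #(jumpSet n f z) = f z n := card_jumpSet (h0 z) (hstep z)
  refine ⟨by simpa only [hcard] using hcover x y n le_rfl hxy, fun i hi => ?_, fun i hi => ?_⟩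
  · refine Finset.sort_getD_le_sort_getD_add _ _ 0 0 (fun m hm => ?_) hi
    have hmn := le_of_mem_jumpSet hm
    rw [hcount x hmn, hcount y hmn]
    rcases hcover x y m hmn hxy with h | h <;> omega
  · refine Finset.sort_getD_le_sort_getD_add _ _ 1 0 (fun m hm => ?_) hi
    have hmn := le_of_mem_jumpSet hm
    rw [hcount x hmn, hcount y hmn]
    rcases hcover x y m hmn hxy with h | h <;> omega
end

section
/- Quilts of type (A_2(i), A_2(j)) are in bijection with {0,1}-matrices of size i × j; in particular |Quilts(A_2(i), A_2(j))| = 2^{ij}, and the quilt lattice is isomorphic to the Boolean lattice B_{ij}. -/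
/-- A type carrying `j` pairwise incomparable elements (the discrete order on `Fin j`). -/
structure DiscFin (j : ℕ) where
  val : Fin j

instance {j : ℕ} : PartialOrder (DiscFin j) where
  le a b := a = b
  le_refl _ := rfl
  le_trans _ _ _ h h' := Eq.trans (α := DiscFin j) h h'
  le_antisymm _ _ h _ := h

/-- The antichain poset `A₂(j)`: a least element `⊥` of rank 0, `j` pairwise
incomparable elements of rank 1, and a greatest element `⊤` of rank 2. -/
abbrev A2 (j : ℕ) := WithBot (WithTop (DiscFin j))

/-- The rank function of `A₂(j)`. -/
def rkA2 (j : ℕ) : A2 j → ℕ :=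
  WithBot.recBotCoe 0 (WithTop.recTopCoe 2 fun _ => 1)

/-- The rank-one element of `A₂(j)` indexed by `y : Fin j`. -/
def a2mid {j : ℕ} (y : Fin j) : A2 j :=
  ((((⟨y⟩ : DiscFin j) : WithTop (DiscFin j))) : A2 j)

/-!
Going up a chain `⊥ ⋖ x ⋖ ⊤` of `A₂(i)` (or of `A₂(j)`) a quilt gains at most one at each
step, starts at `0` and must reach `f ⊤ ⊤ = 2`. Hence `f x ⊤ = f ⊤ y = 1` for all rank-one `x`,
`y`, and `f x y ∈ {0, 1}`: a quilt is determined by its `{0,1}`-matrix of values on rank-one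
pairs. Conversely every matrix extends to a quilt, because a cover in `A₂(i) × A₂(j)` moves
one coordinate from `⊥` to rank one or from rank one to `⊤`; and two quilts compare pointwise
exactly as their matrices do.
-/

theorem DiscFin.not_lt {j : ℕ} (a b : DiscFin j) : ¬ a < b :=
  fun h => h.2 h.1.symm

namespace A2

variable {j : ℕ}

@[elab_as_elim]
theorem induction {motive : A2 j → Prop} (bot : motive ⊥) (mid : ∀ y, motive (a2mid y))
    (top : motive ⊤) (a : A2 j) : motive a := by
  induction a using WithBot.recBotCoe with
  | bot => exact bot
  | coe a =>
    induction a using WithTop.recTopCoe with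
    | top => exact top
    | coe d => exact mid d.val

@[simp]
theorem not_mid_lt_mid (x y : Fin j) : ¬ a2mid x < a2mid y := by
  simpa [a2mid] using DiscFin.not_lt _ _

@[simp]
theorem bot_lt_mid (y : Fin j) : (⊥ : A2 j) < a2mid y := WithBot.bot_lt_coe _

@[simp]
theorem mid_lt_top (y : Fin j) : a2mid y < (⊤ : A2 j) :=
  WithBot.coe_lt_coe.2 (WithTop.coe_lt_top _)

@[simp]
theorem mid_ne_bot (y : Fin j) : a2mid y ≠ ⊥ := (bot_lt_mid y).ne'

@[simp]
theorem mid_ne_top (y : Fin j) : a2mid y ≠ ⊤ := (mid_lt_top y).ne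

theorem bot_covBy_mid (y : Fin j) : (⊥ : A2 j) ⋖ a2mid y := by
  refine ⟨bot_lt_mid y, fun c hc hcy => ?_⟩
  induction c using A2.induction <;> simp_all [not_top_lt]

theorem mid_covBy_top (y : Fin j) : a2mid y ⋖ (⊤ : A2 j) := by
  refine ⟨mid_lt_top y, fun c hyc hc => ?_⟩
  induction c using A2.induction <;> simp_all

theorem not_bot_covBy_top (hj : 0 < j) : ¬ (⊥ : A2 j) ⋖ ⊤ :=
  fun h => h.2 (bot_lt_mid ⟨0, hj⟩) (mid_lt_top ⟨0, hj⟩)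

theorem covBy_iff (hj : 0 < j) {a b : A2 j} :
    a ⋖ b ↔ (a = ⊥ ∧ ∃ y, a2mid y = b) ∨ (∃ x, a2mid x = a) ∧ b = ⊤ := by
  refine ⟨fun h => ?_, ?_⟩
  · have hab := h.lt
    induction a using A2.induction <;> induction b using A2.induction <;>
      simp_all [not_bot_covBy_top hj]
  · rintro (⟨rfl, y, rfl⟩ | ⟨⟨x, rfl⟩, rfl⟩)
    exacts [bot_covBy_mid y, mid_covBy_top x]

end A2

namespace IsQuilt

variable {i j : ℕ} {f : A2 i → A2 j → ℕ}

theorem top_top (hf : IsQuilt (rkA2 i) (rkA2 j) f) : f ⊤ ⊤ = 2 := hf.2.2.1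

theorem mid_mid_le_one (hf : IsQuilt (rkA2 i) (rkA2 j) f) (x : Fin i) (y : Fin j) :
    f (a2mid x) (a2mid y) ≤ 1 := by
  simpa [hf.1] using hf.le_add_one_of_covBy (Prod.mk_covBy_mk_iff_left.2 (A2.bot_covBy_mid x))

theorem mid_top (hf : IsQuilt (rkA2 i) (rkA2 j) f) (x : Fin i) : f (a2mid x) ⊤ = 1 := by
  have h₁ : f (a2mid x) ⊤ ≤ f ⊥ ⊤ + 1 :=
    hf.le_add_one_of_covBy (Prod.mk_covBy_mk_iff_left.2 (A2.bot_covBy_mid x))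
  have h₂ : f ⊤ ⊤ ≤ f (a2mid x) ⊤ + 1 :=
    hf.le_add_one_of_covBy (Prod.mk_covBy_mk_iff_left.2 (A2.mid_covBy_top x))
  rw [hf.1] at h₁
  rw [hf.top_top] at h₂
  omega

theorem top_mid (hf : IsQuilt (rkA2 i) (rkA2 j) f) (y : Fin j) : f ⊤ (a2mid y) = 1 := by
  have h₁ : f ⊤ (a2mid y) ≤ f ⊤ ⊥ + 1 :=
    hf.le_add_one_of_covBy (Prod.mk_covBy_mk_iff_right.2 (A2.bot_covBy_mid y))
  have h₂ : f ⊤ ⊤ ≤ f ⊤ (a2mid y) + 1 :=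
    hf.le_add_one_of_covBy (Prod.mk_covBy_mk_iff_right.2 (A2.mid_covBy_top y))
  rw [hf.2.1] at h₁
  rw [hf.top_top] at h₂
  omega

end IsQuilt

open Classical in
noncomputable def quiltOfMatrix {i j : ℕ} (m : Fin i → Fin j → Prop) : A2 i → A2 j → ℕ :=
  WithBot.recBotCoe (fun _ => 0) <| WithTop.recTopCoe (rkA2 j) fun x =>
    WithBot.recBotCoe 0 <| WithTop.recTopCoe 1 fun y => if m x.val y.val then 1 else 0

section quiltOfMatrix

variable {i j : ℕ} (m : Fin i → Fin j → Prop)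

@[simp]
theorem quiltOfMatrix_bot_left (b : A2 j) : quiltOfMatrix m ⊥ b = 0 := rfl

@[simp]
theorem quiltOfMatrix_bot_right (a : A2 i) : quiltOfMatrix m a ⊥ = 0 := by
  induction a using A2.induction <;> rfl

@[simp]
theorem quiltOfMatrix_top_top : quiltOfMatrix m ⊤ ⊤ = 2 := rfl

@[simp]
theorem quiltOfMatrix_mid_top (x : Fin i) : quiltOfMatrix m (a2mid x) ⊤ = 1 := rfl

@[simp]
theorem quiltOfMatrix_top_mid (y : Fin j) : quiltOfMatrix m ⊤ (a2mid y) = 1 := rfl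

open Classical in
@[simp]
theorem quiltOfMatrix_mid_mid (x : Fin i) (y : Fin j) :
    quiltOfMatrix m (a2mid x) (a2mid y) = if m x y then 1 else 0 := rfl

theorem quiltOfMatrix_isQuilt (hi : 0 < i) (hj : 0 < j) :
    IsQuilt (rkA2 i) (rkA2 j) (quiltOfMatrix m) := by
  refine ⟨quiltOfMatrix_bot_left m, quiltOfMatrix_bot_right m, rfl, ?_⟩
  rintro ⟨a₁, b₁⟩ ⟨a₂, b₂⟩ h
  rw [Prod.mk_covBy_mk_iff, A2.covBy_iff hi, A2.covBy_iff hj] at h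
  rcases h with ⟨h, rfl⟩ | ⟨h, rfl⟩
  · rcases h with ⟨rfl, x, rfl⟩ | ⟨⟨x, rfl⟩, rfl⟩ <;> induction b₁ using A2.induction <;>
      simp [em, em']
  · rcases h with ⟨rfl, y, rfl⟩ | ⟨⟨y, rfl⟩, rfl⟩ <;> induction a₁ using A2.induction <;>
      simp [em, em']

end quiltOfMatrix

theorem IsQuilt.eq_quiltOfMatrix {i j : ℕ} {f : A2 i → A2 j → ℕ}
    (hf : IsQuilt (rkA2 i) (rkA2 j) f) :
    f = quiltOfMatrix fun x y => f (a2mid x) (a2mid y) = 1 := by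
  funext a b
  induction a using A2.induction <;> induction b using A2.induction <;>
    simp only [hf.1, hf.2.1, hf.top_top, hf.mid_top, hf.top_mid, quiltOfMatrix_bot_left,
      quiltOfMatrix_bot_right, quiltOfMatrix_top_top, quiltOfMatrix_mid_top,
      quiltOfMatrix_top_mid, quiltOfMatrix_mid_mid]
  case mid.mid x y =>
    have := hf.mid_mid_le_one x y
    split_ifs <;> omega

theorem quiltOfMatrix_le_quiltOfMatrix_iff {i j : ℕ} {m m' : Fin i → Fin j → Prop} :
    quiltOfMatrix m ≤ quiltOfMatrix m' ↔ m ≤ m' := by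
  refine ⟨fun h x y hm => ?_, fun h a b => ?_⟩
  · by_contra hm'
    simpa [hm, hm'] using h (a2mid x) (a2mid y)
  · induction a using A2.induction <;> induction b using A2.induction <;>
      simp only [quiltOfMatrix_bot_left, quiltOfMatrix_bot_right, quiltOfMatrix_top_top,
        quiltOfMatrix_mid_top, quiltOfMatrix_top_mid, quiltOfMatrix_mid_mid, le_refl]
    case mid.mid x y =>
      have := h x y
      split_ifs <;> simp_all

noncomputable def quiltOrderIso {i j : ℕ} (hi : 0 < i) (hj : 0 < j) :
    {f : A2 i → A2 j → ℕ // IsQuilt (rkA2 i) (rkA2 j) f} ≃o (Fin i → Fin j → Prop) where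
  toFun f x y := f.1 (a2mid x) (a2mid y) = 1
  invFun m := ⟨quiltOfMatrix m, quiltOfMatrix_isQuilt m hi hj⟩
  left_inv f := Subtype.ext f.2.eq_quiltOfMatrix.symm
  right_inv m := by ext x y; simp
  map_rel_iff' {f g} := by
    rw [← quiltOfMatrix_le_quiltOfMatrix_iff]
    exact (congrArg₂ (· ≤ ·) f.2.eq_quiltOfMatrix g.2.eq_quiltOfMatrix).symm.to_iff

/-- Quilts of type `(A₂(i), A₂(j))` are in bijection with `{0,1}`-matrices of size
`i × j`, via the values at pairs of rank-one elements; this bijection is an order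
isomorphism onto the Boolean lattice `B_{ij}` (realized as `Fin i → Fin j → Prop` with
the pointwise order), and in particular there are exactly `2^(i*j)` such quilts. -/
theorem quilts_antichain_antichain (i j : ℕ) (hi : 1 ≤ i) (hj : 1 ≤ j) :
    (Function.Bijective fun f : {f : A2 i → A2 j → ℕ // IsQuilt (rkA2 i) (rkA2 j) f} =>
      fun (x : Fin i) (y : Fin j) => f.1 (a2mid x) (a2mid y) = 1) ∧
    (∀ f g : {f : A2 i → A2 j → ℕ // IsQuilt (rkA2 i) (rkA2 j) f},
      ((∀ (a : A2 i) (b : A2 j), f.1 a b ≤ g.1 a b) ↔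
        (∀ (x : Fin i) (y : Fin j), f.1 (a2mid x) (a2mid y) = 1 →
          g.1 (a2mid x) (a2mid y) = 1))) ∧
    Nat.card {f : A2 i → A2 j → ℕ // IsQuilt (rkA2 i) (rkA2 j) f} = 2 ^ (i * j) := by
  let e := quiltOrderIso hi hj
  refine ⟨e.bijective, fun f g => e.le_iff_le.symm, ?_⟩
  rw [Nat.card_congr e.toEquiv]
  simp [Nat.card_eq_fintype_card, ← pow_mul, mul_comm]
end
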